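/- Fix φ̃ > 0 and L > 0. For γ > 0 let P(γ) denote the unique P > 0 satisfying log(1+P·γ) = 1 + (φ̃·γ − 1)/(1+P·γ). Then the transmit energy E(γ) = P(γ)·L/log(1+P(γ)·γ) is strictly decreasing in γ: if 0 < γ₁ < γ₂ then E(γ₁) > E(γ₂). -/

import Mathlib

/-!
Write `x(γ) = 1 + P(γ) γ`. Clearing the denominator, the defining equation says
`klFun x = x log x + 1 - x = φ γ`. As `klFun` is strictly increasing on `[1, ∞)`, the level `x`
increases with `γ`, so the duration `L / log x` decreases. The power `P = (x - 1) / γ` equals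
`φ / (klFun x / (x - 1))` and decreases too: `klFun x / (x - 1)` is the slope of the secant of the
strictly convex `klFun` through its zero at `1`, hence increases with `x`.
-/

open Real Set InformationTheory

lemma klFun_eq_iff_log_eq {x c : ℝ} (hx : x ≠ 0) :
    klFun x = c ↔ log x = 1 + (c - 1) / x := by
  rw [klFun_apply, ← sub_eq_iff_eq_add', eq_div_iff hx]
  constructor <;> intro h <;> linarith

lemma strictMonoOn_klFun : StrictMonoOn klFun (Ici 1) :=
  strictMonoOn_of_deriv_pos (convex_Ici 1) continuous_klFun.continuousOn fun x hx => by
    rw [interior_Ici] at hx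
    rw [deriv_klFun]
    exact log_pos hx

lemma klFun_pos {x : ℝ} (hx : 1 < x) : 0 < klFun x := by
  simpa [klFun_one] using strictMonoOn_klFun self_mem_Ici hx.le hx

lemma strictMonoOn_klFun_div_sub_one : StrictMonoOn (fun x => klFun x / (x - 1)) (Ioi 1) := by
  intro a ha b hb hab
  have h_mem : ∀ {x : ℝ}, 1 < x → x ∈ Ici (0 : ℝ) := fun hx => mem_Ici.2 (zero_le_one.trans hx.le)
  simpa [klFun_one] using strictConvexOn_klFun.secant_strict_mono (mem_Ici.2 zero_le_one)
    (h_mem ha) (h_mem hb) (ne_of_gt ha) (ne_of_gt hb) hab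

lemma eq_div_klFun_div_sub_one {φ γ Q x : ℝ} (hφ : φ ≠ 0) (hγ : γ ≠ 0)
    (hx : 1 + Q * γ = x) (h : klFun x = φ * γ) : Q = φ / (klFun x / (x - 1)) := by
  rw [h, ← hx]
  field_simp
  ring

theorem lambert_energy_decreasing_in_gain_general
    (φ L : ℝ) (hφ : 0 < φ) (hL : 0 < L) (P : ℝ → ℝ)
    (hP_pos : ∀ γ : ℝ, 0 < γ → 0 < P γ)
    (hP_eq : ∀ γ : ℝ, 0 < γ →
      Real.log (1 + P γ * γ) = 1 + (φ * γ - 1) / (1 + P γ * γ)) :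
    ∀ γ₁ γ₂ : ℝ, 0 < γ₁ → γ₁ < γ₂ →
      P γ₂ * L / Real.log (1 + P γ₂ * γ₂) <
        P γ₁ * L / Real.log (1 + P γ₁ * γ₁) := by
  intro γ₁ γ₂ hγ₁ h12
  have hγ₂ : 0 < γ₂ := hγ₁.trans h12
  have one_lt_level : ∀ γ, 0 < γ → 1 < 1 + P γ * γ := fun γ hγ =>
    lt_add_of_pos_right 1 (mul_pos (hP_pos γ hγ) hγ)
  have klFun_level : ∀ γ, 0 < γ → klFun (1 + P γ * γ) = φ * γ := fun γ hγ =>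
    (klFun_eq_iff_log_eq (zero_lt_one.trans (one_lt_level γ hγ)).ne').2 (hP_eq γ hγ)
  have power_eq : ∀ γ, 0 < γ → P γ = φ / (klFun (1 + P γ * γ) / (1 + P γ * γ - 1)) :=
    fun γ hγ => eq_div_klFun_div_sub_one hφ.ne' hγ.ne' rfl (klFun_level γ hγ)
  have hx₁ := one_lt_level γ₁ hγ₁
  have hx₂ := one_lt_level γ₂ hγ₂
  have level_lt : 1 + P γ₁ * γ₁ < 1 + P γ₂ * γ₂ := by
    rw [← strictMonoOn_klFun.lt_iff_lt hx₁.le hx₂.le, klFun_level γ₁ hγ₁, klFun_level γ₂ hγ₂]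
    exact mul_lt_mul_of_pos_left h12 hφ
  have power_lt : P γ₂ < P γ₁ := by
    rw [power_eq γ₁ hγ₁, power_eq γ₂ hγ₂]
    exact div_lt_div_of_pos_left hφ (div_pos (klFun_pos hx₁) (sub_pos.2 hx₁))
      (strictMonoOn_klFun_div_sub_one hx₁ hx₂ level_lt)
  have duration_lt : L / log (1 + P γ₂ * γ₂) < L / log (1 + P γ₁ * γ₁) :=
    div_lt_div_of_pos_left hL (log_pos hx₁) (log_lt_log (zero_lt_one.trans hx₁) level_lt)
  simp only [mul_div_assoc]
  exact mul_lt_mul'' power_lt duration_lt (hP_pos γ₂ hγ₂).le (div_pos hL (log_pos hx₂)).le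

theorem lambert_energy_decreasing_in_gain
    (φ L : ℝ) (hφ : 0 < φ) (hL : 0 < L) (P : ℝ → ℝ)
    (hP_pos : ∀ γ : ℝ, 0 < γ → 0 < P γ)
    (hP_eq : ∀ γ : ℝ, 0 < γ →
      Real.log (1 + P γ * γ) = 1 + (φ * γ - 1) / (1 + P γ * γ))
    (hP_unique : ∀ γ : ℝ, 0 < γ → ∀ Q : ℝ, 0 < Q →
      Real.log (1 + Q * γ) = 1 + (φ * γ - 1) / (1 + Q * γ) → Q = P γ) :
    ∀ γ₁ γ₂ : ℝ, 0 < γ₁ → γ₁ < γ₂ →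
      P γ₂ * L / Real.log (1 + P γ₂ * γ₂) <
        P γ₁ * L / Real.log (1 + P γ₁ * γ₁) :=
  lambert_energy_decreasing_in_gain_general φ L hφ hL P hP_pos hP_eq
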